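/- Let n ≥ 3 be an integer, K a real number, and let h₁, …, hₙ be real numbers with h₁ + ⋯ + hₙ = K. Then g₁(h₁,…,hₙ) ≤ ((n−2)/(2(n+1))) · K², and this bound is attained at the point with h₁ = 2K/(n+1) and h₂ = ⋯ = hₙ = K/(n+1). -/

import Mathlib

open Finset

/-- The quadratic form `g₁(h₁,…,hₙ) = Σ_{1≤i<j≤n} hᵢhⱼ − (1/(n−1))·h₁·Σ_{j=2}^{n} hⱼ
− Σ_{j=2}^{n} hⱼ² + (1/(n−1))·Σ_{j=2}^{n} hⱼ²` (0-based: `h₁ = h 0`,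
`Σ_{j=2}^{n}` is the sum over indices `j` with `1 ≤ j`). -/
noncomputable def gOne (n : ℕ) (hn : 3 ≤ n) (h : Fin n → ℝ) : ℝ :=
  (∑ i : Fin n, ∑ j : Fin n, if i < j then h i * h j else 0)
    - (1 / ((n : ℝ) - 1)) * h ⟨0, by omega⟩ * (∑ j : Fin n, if 1 ≤ (j : ℕ) then h j else 0)
    - (∑ j : Fin n, if 1 ≤ (j : ℕ) then h j ^ 2 else 0)
    + (1 / ((n : ℝ) - 1)) * (∑ j : Fin n, if 1 ≤ (j : ℕ) then h j ^ 2 else 0)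

lemma cond_sum {n : ℕ} (hn : 3 ≤ n) (f : Fin n → ℝ) :
    ∑ j : Fin n, (if 1 ≤ (j : ℕ) then f j else 0) = (∑ j, f j) - f ⟨0, by omega⟩ := by
  have key : ∀ j : Fin n, (if 1 ≤ (j : ℕ) then f j else 0)
      = f j - (if j = ⟨0, by omega⟩ then f j else 0) := by
    intro j
    rcases Nat.eq_zero_or_pos (j : ℕ) with hj | hj
    · have hj' : j = ⟨0, by omega⟩ := Fin.ext hj
      simp [hj', hj]
    · have hne : j ≠ ⟨0, by omega⟩ := by
        intro e; rw [e] at hj; simp at hj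
      have h1 : 1 ≤ (j : ℕ) := hj
      rw [if_pos h1, if_neg hne]
      ring
  rw [Finset.sum_congr rfl (fun j _ => key j), Finset.sum_sub_distrib,
    Finset.sum_ite_eq' univ _ f]
  simp

lemma pair_sum {n : ℕ} (h : Fin n → ℝ) :
    2 * (∑ i : Fin n, ∑ j : Fin n, if i < j then h i * h j else 0) + ∑ i, h i ^ 2
      = (∑ i, h i) ^ 2 := by
  have hsq : (∑ i, h i) ^ 2 = ∑ i : Fin n, ∑ j : Fin n, h i * h j := by
    rw [sq, Finset.sum_mul_sum]
  have hswap : (∑ i : Fin n, ∑ j : Fin n, if i < j then h i * h j else 0)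
      = ∑ i : Fin n, ∑ j : Fin n, if j < i then h i * h j else 0 := by
    rw [Finset.sum_comm]
    exact Finset.sum_congr rfl fun i _ => Finset.sum_congr rfl fun j _ => by
      rw [mul_comm]
  have hdiag : (∑ i : Fin n, ∑ j : Fin n, if i = j then h i * h j else 0)
      = ∑ i, h i ^ 2 := by
    refine Finset.sum_congr rfl fun i _ => ?_
    rw [Finset.sum_ite_eq univ i (fun j => h i * h j)]
    simp [sq]
  calc 2 * (∑ i : Fin n, ∑ j : Fin n, if i < j then h i * h j else 0) + ∑ i, h i ^ 2
      = (∑ i : Fin n, ∑ j : Fin n, if i < j then h i * h j else 0)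
        + (∑ i : Fin n, ∑ j : Fin n, if j < i then h i * h j else 0)
        + (∑ i : Fin n, ∑ j : Fin n, if i = j then h i * h j else 0) := by
        rw [← hswap, hdiag]; ring
    _ = ∑ i : Fin n, ∑ j : Fin n, h i * h j := by
        rw [← Finset.sum_add_distrib, ← Finset.sum_add_distrib]
        refine Finset.sum_congr rfl fun i _ => ?_
        rw [← Finset.sum_add_distrib, ← Finset.sum_add_distrib]
        refine Finset.sum_congr rfl fun j _ => ?_
        rcases lt_trichotomy i j with hij | hij | hij
        · simp [hij, hij.ne, hij.not_gt]
        · simp [hij, lt_irrefl]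
        · simp [hij, hij.ne', hij.not_gt]
    _ = (∑ i, h i) ^ 2 := hsq.symm

lemma gOne_eq {n : ℕ} (hn : 3 ≤ n) (h : Fin n → ℝ) :
    gOne n hn h
      = ((∑ i, h i) ^ 2 - (∑ i, h i ^ 2)) / 2
        - 1 / ((n : ℝ) - 1) * h ⟨0, by omega⟩ * ((∑ i, h i) - h ⟨0, by omega⟩)
        - ((∑ i, h i ^ 2) - h ⟨0, by omega⟩ ^ 2)
        + 1 / ((n : ℝ) - 1) * ((∑ i, h i ^ 2) - h ⟨0, by omega⟩ ^ 2) := by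
  unfold gOne
  rw [cond_sum hn h, cond_sum hn (fun j => h j ^ 2)]
  have := pair_sum h
  linarith

lemma scalar_ineq (nr K a T : ℝ) (h3 : 3 ≤ nr)
    (hCS : (K - a) ^ 2 ≤ (nr - 1) * (T - a ^ 2)) :
    (K ^ 2 - T) / 2 - 1 / (nr - 1) * a * (K - a) - (T - a ^ 2)
      + 1 / (nr - 1) * (T - a ^ 2) ≤ (nr - 2) / (2 * (nr + 1)) * K ^ 2 := by
  have h1 : (0 : ℝ) < nr - 1 := by linarith
  have h2 : (0 : ℝ) < nr + 1 := by linarith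
  rw [← sub_nonneg]
  have key : (nr - 2) / (2 * (nr + 1)) * K ^ 2
      - ((K ^ 2 - T) / 2 - 1 / (nr - 1) * a * (K - a) - (T - a ^ 2)
        + 1 / (nr - 1) * (T - a ^ 2))
      = ((nr + 1) * (3 * nr - 5) * ((nr - 1) * (T - a ^ 2) - (K - a) ^ 2)
          + (nr - 2) * ((nr + 1) * a - 2 * K) ^ 2)
        / (2 * (nr + 1) * (nr - 1) ^ 2) := by
    field_simp
    ring
  rw [key]
  apply div_nonneg
  · have t1 : 0 ≤ (nr + 1) * (3 * nr - 5) * ((nr - 1) * (T - a ^ 2) - (K - a) ^ 2) := by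
      apply mul_nonneg
      · nlinarith
      · linarith
    have t2 : 0 ≤ (nr - 2) * ((nr + 1) * a - 2 * K) ^ 2 :=
      mul_nonneg (by linarith) (sq_nonneg _)
    linarith
  · positivity

theorem stmt_7 (n : ℕ) (hn : 3 ≤ n) (K : ℝ) (h : Fin n → ℝ) (hsum : ∑ i, h i = K) :
    gOne n hn h ≤ ((n : ℝ) - 2) / (2 * ((n : ℝ) + 1)) * K ^ 2 ∧
    gOne n hn (fun i => if (i : ℕ) = 0 then 2 * K / ((n : ℝ) + 1) else K / ((n : ℝ) + 1))
      = ((n : ℝ) - 2) / (2 * ((n : ℝ) + 1)) * K ^ 2 := by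
  have hn3 : (3 : ℝ) ≤ (n : ℝ) := by exact_mod_cast hn
  have hne1 : (n : ℝ) - 1 ≠ 0 := by linarith
  have hne2 : (n : ℝ) + 1 ≠ 0 := by linarith
  constructor
  · -- inequality
    have z_mem : (⟨0, by omega⟩ : Fin n) ∈ (univ : Finset (Fin n)) := mem_univ _
    have hcard : (((univ : Finset (Fin n)).erase ⟨0, by omega⟩).card : ℝ) = (n : ℝ) - 1 := by
      rw [Finset.card_erase_of_mem z_mem]
      simp only [Finset.card_univ, Fintype.card_fin]
      have h1 : (1 : ℕ) ≤ n := by omega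
      push_cast [Nat.cast_sub h1]
      ring
    have hCS : (K - h ⟨0, by omega⟩) ^ 2
        ≤ ((n : ℝ) - 1) * ((∑ i, h i ^ 2) - h ⟨0, by omega⟩ ^ 2) := by
      have h1 : ∑ i ∈ (univ : Finset (Fin n)).erase ⟨0, by omega⟩, h i
          = (∑ i, h i) - h ⟨0, by omega⟩ := Finset.sum_erase_eq_sub z_mem
      have h2 : ∑ i ∈ (univ : Finset (Fin n)).erase ⟨0, by omega⟩, h i ^ 2
          = (∑ i, h i ^ 2) - h ⟨0, by omega⟩ ^ 2 :=
        Finset.sum_erase_eq_sub (f := fun i => h i ^ 2) z_mem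
      have := sq_sum_le_card_mul_sum_sq
        (s := (univ : Finset (Fin n)).erase ⟨0, by omega⟩) (f := h)
      rw [h1, h2, hcard, hsum] at this
      exact this
    rw [gOne_eq hn h, hsum]
    exact scalar_ineq (n : ℝ) K (h ⟨0, by omega⟩) (∑ i, h i ^ 2) hn3 hCS
  · -- equality at the witness
    set A := 2 * K / ((n : ℝ) + 1) with hA
    set B := K / ((n : ℝ) + 1) with hB
    have key : ∀ C D : ℝ, (∑ i : Fin n, if (i : ℕ) = 0 then C else D)
        = C + ((n : ℝ) - 1) * D := by
      intro C D
      have step : ∀ i : Fin n, (if (i : ℕ) = 0 then C else D)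
          = D + (if i = ⟨0, by omega⟩ then C - D else 0) := by
        intro i
        rcases Nat.eq_zero_or_pos (i : ℕ) with hi | hi
        · have hi' : i = ⟨0, by omega⟩ := Fin.ext hi
          simp [hi', hi]
        · have hne : i ≠ ⟨0, by omega⟩ := by
            intro e; rw [e] at hi; simp at hi
          have hni : (i : ℕ) ≠ 0 := by omega
          simp [hni, hne]
      rw [Finset.sum_congr rfl (fun i _ => step i), Finset.sum_add_distrib,
        Finset.sum_const, Finset.sum_ite_eq' univ _ (fun _ => C - D)]
      simp only [Finset.card_univ, Fintype.card_fin, mem_univ, if_true, nsmul_eq_mul]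
      ring
    rw [gOne_eq hn]
    have e1 : (∑ i : Fin n, (fun i : Fin n =>
        if (i : ℕ) = 0 then 2 * K / ((n : ℝ) + 1) else K / ((n : ℝ) + 1)) i)
        = A + ((n : ℝ) - 1) * B := key A B
    have e2 : (∑ i : Fin n, (fun i : Fin n =>
        if (i : ℕ) = 0 then 2 * K / ((n : ℝ) + 1) else K / ((n : ℝ) + 1)) i ^ 2)
        = A ^ 2 + ((n : ℝ) - 1) * B ^ 2 := by
      have : ∀ i : Fin n, ((if (i : ℕ) = 0 then 2 * K / ((n : ℝ) + 1)
          else K / ((n : ℝ) + 1)) ^ 2) = (if (i : ℕ) = 0 then A ^ 2 else B ^ 2) := by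
        intro i; split <;> rfl
      simp only [this]
      exact key (A ^ 2) (B ^ 2)
    beta_reduce at e1 e2
    rw [e1, e2]
    simp only [if_true]
    rw [hA, hB]
    field_simp
    ring
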